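/- arXiv:2604.07426 — 2 statements merged into one kernel-verified Lean document; each statement's English description precedes it below -/
import Mathlib

section
/- Let M = ⟨S, A, P, R, γ⟩ and M̂ = ⟨S, A, P̂, R, γ⟩ be two finite MDPs sharing the same state space, action space, reward function bounded by Rmax, and discount γ ∈ [0,1), and suppose IPM(P(·|s,a), P̂(·|s,a)) ≤ ε for all (s,a) ∈ S × A. Then for every deterministic policy π : S → A and every state s ∈ S, |V^π_M(s) − V^π_{M̂}(s)| ≤ γ · Rmax · ε / (1−γ)². -/
/-!
An IPM over the unit ball of the sup norm dominates the `ℓ¹` distance, so each row of `P` is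
`ℓ¹`-within `ε` of the corresponding row of `P̂`. Propagating one step of the chain changes the
`ℓ¹` distance between the two state distributions by at most `ε`, so after `t` steps they are
`tε` apart and the expected rewards differ by at most `t ε Rmax`. Summing against the discount,
`∑ₜ t γᵗ = γ / (1 - γ)²`.
-/

open Finset

/-- `p` is a probability mass function on the finite type `S`. -/
def IsPMF {S : Type*} [Fintype S] (p : S → ℝ) : Prop :=
  (∀ s, 0 ≤ p s) ∧ ∑ s, p s = 1

/-- Integral probability metric over the unit-sup-norm function class. -/
noncomputable def IPM {S : Type*} [Fintype S] (p q : S → ℝ) : ℝ :=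
  sSup {x : ℝ | ∃ f : S → ℝ, (∀ s, |f s| ≤ 1) ∧
    x = |∑ s, f s * p s - ∑ s, f s * q s|}

/-- The distribution of the state after `t` steps starting from `s0`,
following the deterministic policy `π` under the kernel `P`. -/
noncomputable def stateDist {S A : Type*} [Fintype S] [DecidableEq S]
    (P : S → A → S → ℝ) (π : S → A) (s0 : S) : ℕ → S → ℝ
  | 0 => fun s => if s = s0 then 1 else 0
  | (t + 1) => fun s' => ∑ s, stateDist P π s0 t s * P s (π s) s'

/-- The value function `V^π_M(s0) = ∑_{t=0}^∞ γ^t E[R(s_t, a_t)]`. -/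
noncomputable def valueFn {S A : Type*} [Fintype S] [DecidableEq S]
    (P : S → A → S → ℝ) (R : S → A → ℝ) (γ : ℝ) (π : S → A) (s0 : S) : ℝ :=
  ∑' t : ℕ, γ ^ t * ∑ s, stateDist P π s0 t s * R s (π s)

/-- The discounted state-action occupancy measure
`ρ^π_{M,s0}(s,a) = (1-γ) ∑_t γ^t Pr(s_t = s, a_t = a)`. -/
noncomputable def occupancy {S A : Type*} [Fintype S] [DecidableEq S] [DecidableEq A]
    (P : S → A → S → ℝ) (γ : ℝ) (π : S → A) (s0 : S) (s : S) (a : A) : ℝ :=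
  (1 - γ) * ∑' t : ℕ, γ ^ t * (if π s = a then stateDist P π s0 t s else 0)

section FiniteSums

variable {S : Type*} [Fintype S]

theorem abs_sum_mul_le_mul_sum_abs {w f : S → ℝ} {C : ℝ} (hf : ∀ s, |f s| ≤ C) :
    |∑ s, w s * f s| ≤ C * ∑ s, |w s| := by
  rw [mul_sum]
  refine (abs_sum_le_sum_abs _ _).trans (sum_le_sum fun s _ => ?_)
  rw [abs_mul, mul_comm C]
  exact mul_le_mul_of_nonneg_left (hf s) (abs_nonneg _)

theorem IsPMF.abs_sum_mul_le {p f : S → ℝ} {C : ℝ} (hp : IsPMF p) (hf : ∀ s, |f s| ≤ C) :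
    |∑ s, p s * f s| ≤ C := by
  simpa [abs_of_nonneg (hp.1 _), hp.2] using abs_sum_mul_le_mul_sum_abs (w := p) hf

theorem IsPMF.sum_mul_kernel {p : S → ℝ} {K : S → S → ℝ} (hp : IsPMF p)
    (hK : ∀ s, IsPMF (K s)) : IsPMF fun s' => ∑ s, p s * K s s' :=
  ⟨fun s' => sum_nonneg fun s _ => mul_nonneg (hp.1 s) ((hK s).1 s'), by
    rw [sum_comm]; simp [← mul_sum, (hK _).2, hp.2]⟩

theorem sum_abs_sum_mul_le (w : S → ℝ) (K : S → S → ℝ) :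
    ∑ s', |∑ s, w s * K s s'| ≤ ∑ s, |w s| * ∑ s', |K s s'| := by
  calc ∑ s', |∑ s, w s * K s s'| ≤ ∑ s', ∑ s, |w s| * |K s s'| :=
        sum_le_sum fun s' _ => (abs_sum_le_sum_abs _ _).trans_eq (by simp only [abs_mul])
    _ = ∑ s, |w s| * ∑ s', |K s s'| := by rw [sum_comm]; simp only [mul_sum]

theorem sum_abs_sub_le_IPM (p q : S → ℝ) : ∑ s, |p s - q s| ≤ IPM p q := by
  have hdiff (f : S → ℝ) : ∑ s, f s * p s - ∑ s, f s * q s = ∑ s, (p s - q s) * f s := by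
    rw [← sum_sub_distrib]; exact sum_congr rfl fun s _ => by ring
  refine le_csSup ⟨∑ s, |p s - q s|, ?_⟩ ⟨fun s => SignType.sign (p s - q s), fun s => ?_, ?_⟩
  · rintro x ⟨f, hf, rfl⟩
    rw [hdiff]
    simpa using abs_sum_mul_le_mul_sum_abs hf
  · rcases lt_trichotomy (p s - q s) 0 with h | h | h <;> simp [h]
  · simp only [hdiff, self_mul_sign]
    exact (abs_of_nonneg (sum_nonneg fun s _ => abs_nonneg (p s - q s))).symm

end FiniteSums

section StateDistribution

variable {S A : Type*} [Fintype S] [DecidableEq S]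

theorem stateDist_isPMF {P : S → A → S → ℝ} (hP : ∀ s a, IsPMF (P s a)) (π : S → A) (s0 : S) :
    ∀ t, IsPMF (stateDist P π s0 t)
  | 0 => ⟨fun s => by by_cases h : s = s0 <;> simp [stateDist, h], by simp [stateDist]⟩
  | t + 1 => (stateDist_isPMF hP π s0 t).sum_mul_kernel fun s => hP s (π s)

theorem sum_abs_stateDist_sub_le {P Phat : S → A → S → ℝ} {ε : ℝ}
    (hP : ∀ s a, IsPMF (P s a)) (hPhat : ∀ s a, IsPMF (Phat s a))
    (hε : ∀ s a, ∑ s', |P s a s' - Phat s a s'| ≤ ε) (π : S → A) (s0 : S) (t : ℕ) :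
    ∑ s, |stateDist P π s0 t s - stateDist Phat π s0 t s| ≤ t * ε := by
  induction t with
  | zero => simp [stateDist]
  | succ t ih =>
    set d := stateDist P π s0 t
    set e := stateDist Phat π s0 t
    have he := stateDist_isPMF hPhat π s0 t
    have hsplit (s' : S) : stateDist P π s0 (t + 1) s' - stateDist Phat π s0 (t + 1) s' =
        ∑ s, (d s - e s) * P s (π s) s' + ∑ s, e s * (P s (π s) s' - Phat s (π s) s') := by
      simp only [stateDist, ← sum_sub_distrib, ← sum_add_distrib]
      exact sum_congr rfl fun s _ => by ring
    have hdrift : ∑ s', |∑ s, (d s - e s) * P s (π s) s'| ≤ ∑ s, |d s - e s| := by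
      refine (sum_abs_sum_mul_le _ _).trans_eq (sum_congr rfl fun s _ => ?_)
      simp [abs_of_nonneg ((hP s (π s)).1 _), (hP s (π s)).2]
    have hmodel : ∑ s', |∑ s, e s * (P s (π s) s' - Phat s (π s) s')| ≤ ε := by
      refine (sum_abs_sum_mul_le _ _).trans ?_
      calc ∑ s, |e s| * ∑ s', |P s (π s) s' - Phat s (π s) s'| ≤ ∑ s, e s * ε :=
            sum_le_sum fun s _ => by
              rw [abs_of_nonneg (he.1 s)]; exact mul_le_mul_of_nonneg_left (hε _ _) (he.1 s)
        _ = ε := by rw [← sum_mul, he.2, one_mul]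
    calc ∑ s', |stateDist P π s0 (t + 1) s' - stateDist Phat π s0 (t + 1) s'|
        ≤ ∑ s', (|∑ s, (d s - e s) * P s (π s) s'| +
            |∑ s, e s * (P s (π s) s' - Phat s (π s) s')|) :=
          sum_le_sum fun s' _ => by rw [hsplit]; exact abs_add_le _ _
      _ ≤ t * ε + ε := by rw [sum_add_distrib]; linarith
      _ = (t + 1 : ℕ) * ε := by push_cast; ring

end StateDistribution

theorem summable_pow_mul_of_abs_le {γ C : ℝ} {a : ℕ → ℝ} (hγ0 : 0 ≤ γ) (hγ1 : γ < 1)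
    (ha : ∀ t, |a t| ≤ C) : Summable fun t => γ ^ t * a t :=
  .of_norm_bounded ((summable_geometric_of_lt_one hγ0 hγ1).mul_right C) fun t => by
    rw [norm_mul, norm_pow, Real.norm_of_nonneg hγ0, Real.norm_eq_abs]
    exact mul_le_mul_of_nonneg_left (ha t) (pow_nonneg hγ0 t)

theorem abs_tsum_pow_mul_sub_le {γ C c : ℝ} {a b : ℕ → ℝ} (hγ0 : 0 ≤ γ) (hγ1 : γ < 1)
    (ha : ∀ t, |a t| ≤ C) (hb : ∀ t, |b t| ≤ C) (hab : ∀ t, |a t - b t| ≤ t * c) :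
    |∑' t, γ ^ t * a t - ∑' t, γ ^ t * b t| ≤ γ * c / (1 - γ) ^ 2 := by
  have hgeom : HasSum (fun t : ℕ => γ ^ t * (t * c)) (γ / (1 - γ) ^ 2 * c) := by
    have := (hasSum_coe_mul_geometric_of_norm_lt_one
      (by rwa [Real.norm_of_nonneg hγ0] : ‖γ‖ < 1)).mul_right c
    exact this.congr_fun fun t => by ring
  rw [← (summable_pow_mul_of_abs_le hγ0 hγ1 ha).tsum_sub (summable_pow_mul_of_abs_le hγ0 hγ1 hb),
    ← Real.norm_eq_abs]
  refine (tsum_of_norm_bounded hgeom fun t => ?_).trans_eq (by ring)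
  rw [← mul_sub, norm_mul, norm_pow, Real.norm_of_nonneg hγ0, Real.norm_eq_abs]
  exact mul_le_mul_of_nonneg_left (hab t) (pow_nonneg hγ0 t)

theorem value_gap_uniform_ipm_general
    {S A : Type*} [Fintype S] [DecidableEq S]
    (P Phat : S → A → S → ℝ) (R : S → A → ℝ) (Rmax γ ε : ℝ)
    (hP : ∀ s a, IsPMF (P s a)) (hPhat : ∀ s a, IsPMF (Phat s a))
    (hR : ∀ s a, |R s a| ≤ Rmax)
    (hγ0 : 0 ≤ γ) (hγ1 : γ < 1)
    (hIPM : ∀ s a, IPM (P s a) (Phat s a) ≤ ε)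
    (π : S → A) (s : S) :
    |valueFn P R γ π s - valueFn Phat R γ π s| ≤ γ * Rmax * ε / (1 - γ) ^ 2 := by
  have hRmax : 0 ≤ Rmax := (abs_nonneg _).trans (hR s (π s))
  have hε (s a) : ∑ s', |P s a s' - Phat s a s'| ≤ ε := (sum_abs_sub_le_IPM _ _).trans (hIPM s a)
  have hRπ (s' : S) : |R s' (π s')| ≤ Rmax := hR s' (π s')
  have hreward_gap (t : ℕ) :
      |∑ s', stateDist P π s t s' * R s' (π s') - ∑ s', stateDist Phat π s t s' * R s' (π s')|
        ≤ t * (Rmax * ε) := by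
    simp only [← sum_sub_distrib, ← sub_mul]
    calc _ ≤ Rmax * ∑ s', |stateDist P π s t s' - stateDist Phat π s t s'| :=
          abs_sum_mul_le_mul_sum_abs hRπ
      _ ≤ Rmax * (t * ε) :=
          mul_le_mul_of_nonneg_left (sum_abs_stateDist_sub_le hP hPhat hε π s t) hRmax
      _ = t * (Rmax * ε) := by ring
  calc _ ≤ γ * (Rmax * ε) / (1 - γ) ^ 2 :=
        abs_tsum_pow_mul_sub_le hγ0 hγ1 (fun t => (stateDist_isPMF hP π s t).abs_sum_mul_le hRπ)
          (fun t => (stateDist_isPMF hPhat π s t).abs_sum_mul_le hRπ) hreward_gap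
    _ = γ * Rmax * ε / (1 - γ) ^ 2 := by ring

/-- **Simulation-lemma value gap under a uniform IPM transition error.**
If the two kernels are pointwise within IPM distance `ε`, then for any deterministic
policy `π` and state `s`, the value functions of the two MDPs differ by at most
`γ · Rmax · ε / (1 - γ)²`. -/
theorem value_gap_uniform_ipm
    {S A : Type*} [Fintype S] [DecidableEq S] [Nonempty S]
    (P Phat : S → A → S → ℝ) (R : S → A → ℝ) (Rmax γ ε : ℝ)
    (hP : ∀ s a, IsPMF (P s a)) (hPhat : ∀ s a, IsPMF (Phat s a))
    (hR : ∀ s a, |R s a| ≤ Rmax)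
    (hγ0 : 0 ≤ γ) (hγ1 : γ < 1)
    (hIPM : ∀ s a, IPM (P s a) (Phat s a) ≤ ε)
    (π : S → A) (s : S) :
    |valueFn P R γ π s - valueFn Phat R γ π s| ≤ γ * Rmax * ε / (1 - γ) ^ 2 :=
  value_gap_uniform_ipm_general P Phat R Rmax γ ε hP hPhat hR hγ0 hγ1 hIPM π s
end

section
/- (IPM-PDL value gap.) Let M = ⟨S, A, P, R, γ⟩ and M̂ = ⟨S, A, P̂, R, γ⟩ be two finite MDPs sharing the same state space, action space, reward function bounded by Rmax, and discount γ ∈ [0,1), and suppose IPM(P(·|s,a), P̂(·|s,a)) ≤ ε for all (s,a). Let π* : S → A be a deterministic policy that is optimal for M (i.e., V^{π*}_M(s) ≥ V^π_M(s) for every deterministic policy π and every s ∈ S) and let π̂ : S → A be a deterministic policy that is optimal for M̂. Then for every initial state s0 ∈ S, V^{π*}_M(s0) − V^{π̂}_M(s0) ≤ (2γ·Rmax/(1−γ)²)·ε + (2·Rmax/(1−γ)²) · ∑_{(s,a)∈S×A} ρ^{π̂}_{M,s0}(s,a) · IPM(P(·|s,a), P̂(·|s,a)). -/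
open Finset

/-!
The regret splits as
`(V^{π*}_M - V^{π*}_M̂) + (V^{π*}_M̂ - V^{π̂}_M̂) + (V^{π̂}_M̂ - V^{π̂}_M)`,
and the middle term is `≤ 0` because `π̂` is optimal in `M̂`. The outer terms are controlled by
the simulation lemma `V^π_M̂(s0) - V^π_M(s0) = γ ∑_s w(s) ((P̂ - P) V^π_M̂)(s)`, where `w` is the
discounted visitation of `π` in `M`: since `‖V^π_M̂‖_∞ ≤ Rmax / (1 - γ)`, each summand is at most
`Rmax / (1 - γ) · IPM(P(·|s,π s), P̂(·|s,π s))`, and `∑_s w(s) = 1 / (1 - γ)`.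
-/

lemma IsPMF.le_one {S : Type*} [Fintype S] {p : S → ℝ} (hp : IsPMF p) (s : S) : p s ≤ 1 :=
  hp.2 ▸ single_le_sum (fun i _ => hp.1 i) (mem_univ s)

lemma abs_sum_mul_le_mul_sum {S : Type*} [Fintype S] {w f : S → ℝ} {C : ℝ}
    (hw : ∀ s, 0 ≤ w s) (hf : ∀ s, |f s| ≤ C) : |∑ s, w s * f s| ≤ C * ∑ s, w s :=
  calc |∑ s, w s * f s| ≤ ∑ s, |w s * f s| := abs_sum_le_sum_abs _ _
    _ ≤ ∑ s, C * w s := sum_le_sum fun s _ => by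
        rw [abs_mul, abs_of_nonneg (hw s), mul_comm]
        exact mul_le_mul_of_nonneg_right (hf s) (hw s)
    _ = C * ∑ s, w s := (mul_sum _ _ _).symm

section IPM

variable {S : Type*} [Fintype S] {p q : S → ℝ}

lemma IPM_bddAbove (hp : IsPMF p) (hq : IsPMF q) :
    BddAbove {x : ℝ | ∃ f : S → ℝ, (∀ s, |f s| ≤ 1) ∧
      x = |∑ s, f s * p s - ∑ s, f s * q s|} := by
  refine ⟨2, ?_⟩
  rintro x ⟨f, hf, rfl⟩
  have hmean : ∀ r : S → ℝ, IsPMF r → |∑ s, f s * r s| ≤ 1 := fun r hr => by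
    simpa only [mul_comm (f _), hr.2, mul_one] using abs_sum_mul_le_mul_sum hr.1 hf
  linarith [abs_sub (∑ s, f s * p s) (∑ s, f s * q s), hmean p hp, hmean q hq]

lemma le_IPM (hp : IsPMF p) (hq : IsPMF q) {f : S → ℝ} (hf : ∀ s, |f s| ≤ 1) :
    |∑ s, f s * p s - ∑ s, f s * q s| ≤ IPM p q :=
  le_csSup (IPM_bddAbove hp hq) ⟨f, hf, rfl⟩

lemma IPM_nonneg (hp : IsPMF p) (hq : IsPMF q) : 0 ≤ IPM p q :=
  (abs_nonneg _).trans (le_IPM hp hq (f := 0) fun s => by simp)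

lemma abs_sum_mul_sub_le_mul_IPM (hp : IsPMF p) (hq : IsPMF q) {f : S → ℝ} {C : ℝ}
    (hC : 0 ≤ C) (hf : ∀ s, |f s| ≤ C) :
    |∑ s, f s * p s - ∑ s, f s * q s| ≤ C * IPM p q := by
  rcases hC.eq_or_lt with rfl | hC
  · have hf0 : f = 0 := funext fun s => abs_nonpos_iff.mp (hf s)
    simp [hf0]
  · have hscaled : ∀ s, |f s / C| ≤ 1 := fun s => by
      rw [abs_div, abs_of_pos hC, div_le_one hC]
      exact hf s
    have h := le_IPM hp hq hscaled
    simp_rw [div_mul_eq_mul_div, ← sum_div, ← sub_div, abs_div, abs_of_pos hC,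
      div_le_iff₀ hC] at h
    linarith

end IPM

/-- `ρ^π_{M,s0}(s, π s) / (1 - γ)`: the occupancy measure without its normalising factor. -/
noncomputable def visitation {S A : Type*} [Fintype S] [DecidableEq S]
    (P : S → A → S → ℝ) (γ : ℝ) (π : S → A) (s0 s : S) : ℝ :=
  ∑' t : ℕ, γ ^ t * stateDist P π s0 t s

section Visitation

variable {S A : Type*} [Fintype S] [DecidableEq S] {P : S → A → S → ℝ} {π : S → A} {γ : ℝ}

lemma isPMF_stateDist (hP : ∀ s a, IsPMF (P s a)) (s0 : S) (t : ℕ) :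
    IsPMF (stateDist P π s0 t) := by
  induction t with
  | zero => exact ⟨fun s => by simp only [stateDist]; split_ifs <;> norm_num, by simp [stateDist]⟩
  | succ t ih =>
    refine ⟨fun s' => sum_nonneg fun s _ => mul_nonneg (ih.1 s) ((hP s (π s)).1 s'), ?_⟩
    simp only [stateDist]
    rw [sum_comm]
    simp [← mul_sum, (hP _ _).2, ih.2]

lemma stateDist_succ_left (s0 : S) (t : ℕ) (s : S) :
    stateDist P π s0 (t + 1) s = ∑ s1, P s0 (π s0) s1 * stateDist P π s1 t s := by
  induction t generalizing s with
  | zero => simp [stateDist]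
  | succ t ih =>
    rw [stateDist]
    simp_rw [ih, sum_mul, mul_assoc]
    rw [sum_comm]
    simp [stateDist, mul_sum]

lemma summable_pow_mul_stateDist (hP : ∀ s a, IsPMF (P s a)) (hγ0 : 0 ≤ γ) (hγ1 : γ < 1)
    (s0 s : S) : Summable fun t => γ ^ t * stateDist P π s0 t s :=
  (summable_geometric_of_lt_one hγ0 hγ1).of_nonneg_of_le
    (fun t => mul_nonneg (pow_nonneg hγ0 t) ((isPMF_stateDist hP s0 t).1 s))
    (fun t => mul_le_of_le_one_right (pow_nonneg hγ0 t) ((isPMF_stateDist hP s0 t).le_one s))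

lemma visitation_nonneg (hP : ∀ s a, IsPMF (P s a)) (hγ0 : 0 ≤ γ) (s0 s : S) :
    0 ≤ visitation P γ π s0 s :=
  tsum_nonneg fun t => mul_nonneg (pow_nonneg hγ0 t) ((isPMF_stateDist hP s0 t).1 s)

lemma tsum_pow_mul_sum_stateDist_mul (hP : ∀ s a, IsPMF (P s a)) (hγ0 : 0 ≤ γ) (hγ1 : γ < 1)
    (s0 : S) (h : S → ℝ) :
    ∑' t, γ ^ t * ∑ s, stateDist P π s0 t s * h s = ∑ s, visitation P γ π s0 s * h s := by
  simp_rw [mul_sum, ← mul_assoc]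
  rw [Summable.tsum_finsetSum fun s _ => (summable_pow_mul_stateDist hP hγ0 hγ1 s0 s).mul_right _]
  simp_rw [tsum_mul_right, visitation]

lemma sum_visitation (hP : ∀ s a, IsPMF (P s a)) (hγ0 : 0 ≤ γ) (hγ1 : γ < 1) (s0 : S) :
    ∑ s, visitation P γ π s0 s = (1 - γ)⁻¹ := by
  simpa [(isPMF_stateDist hP s0 _).2, tsum_geometric_of_lt_one hγ0 hγ1] using
    (tsum_pow_mul_sum_stateDist_mul (π := π) hP hγ0 hγ1 s0 1).symm

lemma visitation_eq_ite_add_right (hP : ∀ s a, IsPMF (P s a)) (hγ0 : 0 ≤ γ) (hγ1 : γ < 1)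
    (s0 s' : S) :
    visitation P γ π s0 s' =
      (if s' = s0 then 1 else 0) + γ * ∑ s, visitation P γ π s0 s * P s (π s) s' := by
  rw [visitation, (summable_pow_mul_stateDist hP hγ0 hγ1 s0 s').tsum_eq_zero_add,
    ← tsum_pow_mul_sum_stateDist_mul hP hγ0 hγ1, ← tsum_mul_left]
  simp [stateDist, pow_succ, mul_assoc, mul_left_comm γ]

lemma visitation_eq_ite_add_left (hP : ∀ s a, IsPMF (P s a)) (hγ0 : 0 ≤ γ) (hγ1 : γ < 1)
    (s0 s : S) :
    visitation P γ π s0 s =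
      (if s = s0 then 1 else 0) + γ * ∑ s1, P s0 (π s0) s1 * visitation P γ π s1 s := by
  have hshift : ∀ t, γ ^ (t + 1) * stateDist P π s0 (t + 1) s =
      ∑ s1, γ * P s0 (π s0) s1 * (γ ^ t * stateDist P π s1 t s) := fun t => by
    rw [stateDist_succ_left, mul_sum]
    exact sum_congr rfl fun _ _ => by ring
  rw [visitation, (summable_pow_mul_stateDist hP hγ0 hγ1 s0 s).tsum_eq_zero_add,
    tsum_congr hshift, Summable.tsum_finsetSum fun s1 _ =>
      (summable_pow_mul_stateDist hP hγ0 hγ1 s1 s).mul_left _]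
  simp [stateDist, visitation, mul_sum, tsum_mul_left, mul_assoc]

lemma sum_visitation_mul_le (hP : ∀ s a, IsPMF (P s a)) (hγ0 : 0 ≤ γ) (hγ1 : γ < 1) (s0 : S)
    {f : S → ℝ} {C : ℝ} (hf : ∀ s, f s ≤ C) :
    ∑ s, visitation P γ π s0 s * f s ≤ C * (1 - γ)⁻¹ := by
  rw [← sum_visitation hP hγ0 hγ1 s0, mul_sum]
  exact sum_le_sum fun s _ => by
    rw [mul_comm C]
    exact mul_le_mul_of_nonneg_left (hf s) (visitation_nonneg hP hγ0 s0 s)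

end Visitation

section Value

variable {S A : Type*} [Fintype S] [DecidableEq S] {P : S → A → S → ℝ} {R : S → A → ℝ}
  {π : S → A} {γ : ℝ}

lemma valueFn_eq_sum_visitation_mul (hP : ∀ s a, IsPMF (P s a)) (hγ0 : 0 ≤ γ) (hγ1 : γ < 1)
    (s0 : S) : valueFn P R γ π s0 = ∑ s, visitation P γ π s0 s * R s (π s) :=
  tsum_pow_mul_sum_stateDist_mul hP hγ0 hγ1 s0 _

lemma valueFn_bellman (hP : ∀ s a, IsPMF (P s a)) (hγ0 : 0 ≤ γ) (hγ1 : γ < 1) (s0 : S) :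
    valueFn P R γ π s0 = R s0 (π s0) + γ * ∑ s1, P s0 (π s0) s1 * valueFn P R γ π s1 := by
  simp_rw [valueFn_eq_sum_visitation_mul hP hγ0 hγ1]
  conv_lhs => enter [2, s]; rw [visitation_eq_ite_add_left hP hγ0 hγ1 s0 s]
  simp_rw [add_mul, sum_add_distrib, mul_sum, sum_mul]
  rw [sum_comm]
  simp [mul_assoc]

lemma abs_valueFn_le {Rmax : ℝ} (hP : ∀ s a, IsPMF (P s a)) (hR : ∀ s a, |R s a| ≤ Rmax)
    (hγ0 : 0 ≤ γ) (hγ1 : γ < 1) (s0 : S) : |valueFn P R γ π s0| ≤ Rmax / (1 - γ) := by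
  rw [valueFn_eq_sum_visitation_mul hP hγ0 hγ1, div_eq_mul_inv, ← sum_visitation hP hγ0 hγ1 s0]
  exact abs_sum_mul_le_mul_sum (visitation_nonneg hP hγ0 s0) fun s => hR s (π s)

lemma sum_visitation_mul_sub_eq (hP : ∀ s a, IsPMF (P s a)) (hγ0 : 0 ≤ γ) (hγ1 : γ < 1)
    (s0 : S) (V : S → ℝ) :
    ∑ s, visitation P γ π s0 s * (V s - γ * ∑ s', P s (π s) s' * V s') = V s0 := by
  have hflow : ∑ s', visitation P γ π s0 s' * V s' =
      V s0 + γ * ∑ s, visitation P γ π s0 s * ∑ s', P s (π s) s' * V s' := by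
    conv_lhs => enter [2, s']; rw [visitation_eq_ite_add_right hP hγ0 hγ1 s0 s']
    simp_rw [add_mul, sum_add_distrib, mul_sum, sum_mul]
    rw [sum_comm]
    simp [mul_assoc]
  simp_rw [mul_sub, sum_sub_distrib, hflow, mul_left_comm _ γ, ← mul_sum]
  ring

lemma valueFn_sub_valueFn {Q : S → A → S → ℝ} (hP : ∀ s a, IsPMF (P s a))
    (hQ : ∀ s a, IsPMF (Q s a)) (hγ0 : 0 ≤ γ) (hγ1 : γ < 1) (s0 : S) :
    valueFn Q R γ π s0 - valueFn P R γ π s0 =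
      γ * ∑ s, visitation P γ π s0 s *
        (∑ s', Q s (π s) s' * valueFn Q R γ π s' - ∑ s', P s (π s) s' * valueFn Q R γ π s') := by
  have hreward : ∀ s, R s (π s) =
      valueFn Q R γ π s - γ * ∑ s', Q s (π s) s' * valueFn Q R γ π s' := fun s => by
    linarith [valueFn_bellman (R := R) (π := π) hQ hγ0 hγ1 s]
  conv_lhs => rw [← sum_visitation_mul_sub_eq (π := π) hP hγ0 hγ1 s0 (valueFn Q R γ π),
    valueFn_eq_sum_visitation_mul (π := π) hP hγ0 hγ1]
  rw [← sum_sub_distrib, mul_sum]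
  exact sum_congr rfl fun s _ => by rw [hreward s]; ring

lemma abs_valueFn_sub_valueFn_le {Q : S → A → S → ℝ} {Rmax : ℝ} (hP : ∀ s a, IsPMF (P s a))
    (hQ : ∀ s a, IsPMF (Q s a)) (hR : ∀ s a, |R s a| ≤ Rmax) (hγ0 : 0 ≤ γ) (hγ1 : γ < 1)
    (s0 : S) :
    |valueFn Q R γ π s0 - valueFn P R γ π s0| ≤
      γ * (Rmax / (1 - γ)) * ∑ s, visitation P γ π s0 s * IPM (P s (π s)) (Q s (π s)) := by
  have hK : 0 ≤ Rmax / (1 - γ) := (abs_nonneg _).trans (abs_valueFn_le (π := π) hQ hR hγ0 hγ1 s0)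
  have hstep : ∀ s, |∑ s', Q s (π s) s' * valueFn Q R γ π s' -
      ∑ s', P s (π s) s' * valueFn Q R γ π s'| ≤
        Rmax / (1 - γ) * IPM (P s (π s)) (Q s (π s)) := fun s => by
    rw [abs_sub_comm]
    simpa only [mul_comm (valueFn Q R γ π _)] using abs_sum_mul_sub_le_mul_IPM
      (hP s (π s)) (hQ s (π s)) hK fun s' => abs_valueFn_le (π := π) hQ hR hγ0 hγ1 s'
  rw [valueFn_sub_valueFn hP hQ hγ0 hγ1, abs_mul, abs_of_nonneg hγ0, mul_assoc, mul_sum]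
  refine mul_le_mul_of_nonneg_left ((abs_sum_le_sum_abs _ _).trans (sum_le_sum fun s _ => ?_)) hγ0
  rw [abs_mul, abs_of_nonneg (visitation_nonneg hP hγ0 s0 s), mul_left_comm]
  exact mul_le_mul_of_nonneg_left (hstep s) (visitation_nonneg hP hγ0 s0 s)

end Value

lemma sum_sum_occupancy_mul {S A : Type*} [Fintype S] [DecidableEq S] [Fintype A]
    [DecidableEq A] (P : S → A → S → ℝ) (γ : ℝ) (π : S → A) (s0 : S) (c : S → A → ℝ) :
    ∑ s, ∑ a, occupancy P γ π s0 s a * c s a =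
      (1 - γ) * ∑ s, visitation P γ π s0 s * c s (π s) := by
  have hocc : ∀ s a, occupancy P γ π s0 s a =
      if π s = a then (1 - γ) * visitation P γ π s0 s else 0 := fun s a => by
    split_ifs with h <;> simp [occupancy, visitation, h]
  simp [hocc, mul_sum, mul_assoc]

theorem ipm_pdl_value_gap_general
    {S A : Type*} [Fintype S] [DecidableEq S]
    [Fintype A] [DecidableEq A]
    (P Phat : S → A → S → ℝ) (R : S → A → ℝ) (Rmax γ ε : ℝ)
    (hP : ∀ s a, IsPMF (P s a)) (hPhat : ∀ s a, IsPMF (Phat s a))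
    (hR : ∀ s a, |R s a| ≤ Rmax)
    (hγ0 : 0 ≤ γ) (hγ1 : γ < 1)
    (hIPM : ∀ s a, IPM (P s a) (Phat s a) ≤ ε)
    (πstar πhat : S → A)
    (hπhat : ∀ (π : S → A) (s : S), valueFn Phat R γ π s ≤ valueFn Phat R γ πhat s)
    (s0 : S) :
    valueFn P R γ πstar s0 - valueFn P R γ πhat s0 ≤
      (2 * γ * Rmax / (1 - γ) ^ 2) * ε +
      (2 * Rmax / (1 - γ) ^ 2) *
        ∑ s, ∑ a, occupancy P γ πhat s0 s a * IPM (P s a) (Phat s a) := by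
  have h1γ : 0 < 1 - γ := by linarith
  have hK : 0 ≤ Rmax / (1 - γ) :=
    (abs_nonneg _).trans (abs_valueFn_le (π := πhat) hP hR hγ0 hγ1 s0)
  have hε : 0 ≤ ε := (IPM_nonneg (hP s0 (πhat s0)) (hPhat s0 (πhat s0))).trans (hIPM _ _)
  set E := ∑ s, visitation P γ πhat s0 s * IPM (P s (πhat s)) (Phat s (πhat s))
  have hE : 0 ≤ E := sum_nonneg fun s _ => mul_nonneg (visitation_nonneg hP hγ0 s0 s)
    (IPM_nonneg (hP s (πhat s)) (hPhat s (πhat s)))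
  have hgap_star := (abs_sub_le_iff.mp
    (abs_valueFn_sub_valueFn_le (π := πstar) hP hPhat hR hγ0 hγ1 s0)).2
  have hopt := hπhat πstar s0
  have hgap_hat := (abs_sub_le_iff.mp
    (abs_valueFn_sub_valueFn_le (π := πhat) hP hPhat hR hγ0 hγ1 s0)).1
  have hstar := sum_visitation_mul_le (π := πstar) hP hγ0 hγ1 s0 fun s => hIPM s (πstar s)
  have hKε : γ * (Rmax / (1 - γ)) * (ε * (1 - γ)⁻¹) ≤ 2 * γ * Rmax / (1 - γ) ^ 2 * ε := by
    rw [show 2 * γ * Rmax / (1 - γ) ^ 2 * ε = 2 * (γ * (Rmax / (1 - γ)) * (ε * (1 - γ)⁻¹)) by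
      field_simp]
    linarith [mul_nonneg (mul_nonneg hγ0 hK) (mul_nonneg hε (inv_nonneg.2 h1γ.le))]
  have hKE : γ * (Rmax / (1 - γ)) * E ≤ 2 * Rmax / (1 - γ) ^ 2 * ((1 - γ) * E) := by
    rw [show 2 * Rmax / (1 - γ) ^ 2 * ((1 - γ) * E) = 2 * (Rmax / (1 - γ) * E) by
      field_simp]
    nlinarith [mul_nonneg hK hE]
  rw [sum_sum_occupancy_mul]
  linarith [mul_le_mul_of_nonneg_left hstar (mul_nonneg hγ0 hK)]

/-- **IPM-PDL value gap (Theorem 1 of the paper).** If `π*` is optimal for the true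
MDP `M` and `π̂` is optimal for the learned MDP `M̂`, and the kernels are pointwise
within IPM distance `ε`, then the regret of deploying `π̂` in `M` from any initial
state `s0` is bounded by `(2γRmax/(1-γ)²)ε` plus `(2Rmax/(1-γ)²)` times the
occupancy-weighted expected IPM transition error under `π̂` in `M`. -/
theorem ipm_pdl_value_gap
    {S A : Type*} [Fintype S] [DecidableEq S] [Nonempty S]
    [Fintype A] [DecidableEq A] [Nonempty A]
    (P Phat : S → A → S → ℝ) (R : S → A → ℝ) (Rmax γ ε : ℝ)
    (hP : ∀ s a, IsPMF (P s a)) (hPhat : ∀ s a, IsPMF (Phat s a))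
    (hR : ∀ s a, |R s a| ≤ Rmax)
    (hγ0 : 0 ≤ γ) (hγ1 : γ < 1)
    (hIPM : ∀ s a, IPM (P s a) (Phat s a) ≤ ε)
    (πstar πhat : S → A)
    (hπstar : ∀ (π : S → A) (s : S), valueFn P R γ π s ≤ valueFn P R γ πstar s)
    (hπhat : ∀ (π : S → A) (s : S), valueFn Phat R γ π s ≤ valueFn Phat R γ πhat s)
    (s0 : S) :
    valueFn P R γ πstar s0 - valueFn P R γ πhat s0 ≤
      (2 * γ * Rmax / (1 - γ) ^ 2) * ε +
      (2 * Rmax / (1 - γ) ^ 2) *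
        ∑ s, ∑ a, occupancy P γ πhat s0 s a * IPM (P s a) (Phat s a) :=
  ipm_pdl_value_gap_general P Phat R Rmax γ ε hP hPhat hR hγ0 hγ1 hIPM πstar πhat hπhat s0
end
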